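/- Let M1, M2 be integers with 4 ≤ M1 ≤ M2. Then the average effective resistance of the two-dimensional toroidal grid satisfies R_ave(T_{M1,M2}) ≥ (1/(2π))·log M1 − (1/12)·(M2/M1) − 1/2, where log denotes the natural logarithm. -/

import Mathlib

open Real Finset

/-- Average effective resistance of the two-dimensional toroidal grid `T_{M1,M2}`. -/
noncomputable def Rave2 (M1 M2 : ℕ) : ℝ :=
  (1 / ((M1 : ℝ) * M2)) * ∑ i ∈ Finset.range M1, ∑ j ∈ Finset.range M2,
    if i = 0 ∧ j = 0 then 0
    else 1 / (4 - 2 * Real.cos (2 * Real.pi * i / M1) - 2 * Real.cos (2 * Real.pi * j / M2))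


/-!
For `i ≠ 0` and angles `x = 2πi/M1`, `y = 2πj/M2`, the bound `1 - cos x ≤ x² / 2` gives a summand
of at least `1 / (x² + y²)` once `x, y` are reflected into `[0, π]` (the sum is invariant under
`i ↦ M1 - i`, `j ↦ M2 - j`). For fixed `x` the sum over `j` is a left Riemann sum of the decreasing
function `y ↦ 1 / (x² + y²)`, so it dominates an `arctan` integral, which is `M2 / (2x)` up to
errors `M2 / π²` and `1 / x²`. Summing the main term over `1 ≤ i ≤ (M1 - 1) / 2` produces a
harmonic number, hence `log M1 / (2π)`, while the errors total at most
`log 2 / (2π) + 2 / π² < 1 / 2`.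
-/

theorem Real.arctan_le_self {x : ℝ} (hx : 0 ≤ x) : arctan x ≤ x :=
  calc arctan x ≤ tan (arctan x) := le_tan (arctan_nonneg.2 hx) (arctan_lt_pi_div_two x)
    _ = x := tan_arctan x

theorem pi_div_two_sub_inv_le_arctan {x : ℝ} (hx : 0 < x) : π / 2 - x⁻¹ ≤ arctan x := by
  have h := arctan_inv_of_pos hx
  linarith [arctan_le_self (inv_nonneg.2 hx.le)]

theorem arctan_mul_sub_arctan_mul_le_sum {h : ℝ} (hh : 0 ≤ h) {m n : ℕ} (hmn : m ≤ n) :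
    arctan (n * h) - arctan (m * h) ≤ ∑ k ∈ Ico m n, h / (1 + (k * h) ^ 2) := by
  have hderiv (x : ℝ) : HasDerivAt (fun x => arctan (x * h)) (h / (1 + (x * h) ^ 2)) x := by
    simpa [div_eq_inv_mul] using ((hasDerivAt_id x).mul_const h).arctan
  have hanti : AntitoneOn (fun x : ℝ => h / (1 + (x * h) ^ 2)) (Set.Icc (m : ℝ) n) := by
    intro x hx y _ hxy
    have : 0 ≤ x * h := mul_nonneg ((Nat.cast_nonneg m).trans hx.1) hh
    dsimp only
    gcongr
  calc arctan (n * h) - arctan (m * h) = ∫ x in (m : ℝ)..n, h / (1 + (x * h) ^ 2) :=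
        (intervalIntegral.integral_eq_sub_of_hasDerivAt (fun x _ => hderiv x)
          (Continuous.intervalIntegrable (by fun_prop (disch := intro; positivity)) _ _)).symm
    _ ≤ _ := hanti.integral_le_sum_Ico hmn

theorem le_sum_inv_sq_add_sq {a t : ℝ} (ha : 0 < a) (ht : 0 < t) {J : ℕ} (hJ : π ≤ (J + 1) * t) :
    π / (t * a) - 2 / (t * π) - 1 / a ^ 2 ≤
      ∑ j ∈ range (J + 1), 1 / (a ^ 2 + (j * t) ^ 2) +
        ∑ j ∈ Icc 1 J, 1 / (a ^ 2 + (j * t) ^ 2) := by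
  set u := t / a with hu
  have hterm (j : ℕ) : 1 / (a ^ 2 + (j * t) ^ 2) = (t * a)⁻¹ * (u / (1 + (j * u) ^ 2)) := by
    rw [hu]; field_simp
  have hfull := arctan_mul_sub_arctan_mul_le_sum (h := u) (by positivity) (Nat.zero_le (J + 1))
  have htail := arctan_mul_sub_arctan_mul_le_sum (h := u) (by positivity) (Nat.le_add_left 1 J)
  have hnear : arctan u ≤ u := arctan_le_self (by positivity)
  have hfar : π / 2 - a / π ≤ arctan ((J + 1 : ℕ) * u) := by
    have hinv : ((J + 1 : ℕ) * u)⁻¹ ≤ a / π := by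
      rw [Nat.cast_succ, hu, ← mul_div_assoc, inv_div]
      gcongr
    linarith [pi_div_two_sub_inv_le_arctan (x := (J + 1 : ℕ) * u) (by positivity)]
  simp only [Nat.cast_zero, zero_mul, arctan_zero, sub_zero, Nat.cast_one, one_mul] at hfull htail
  rw [range_eq_Ico, ← Ico_add_one_right_eq_Icc, sum_congr rfl fun j _ => hterm j,
    sum_congr rfl fun j _ => hterm j, ← mul_sum, ← mul_sum, ← mul_add]
  have hlhs : π / (t * a) - 2 / (t * π) - 1 / a ^ 2 = (t * a)⁻¹ * (π - 2 * (a / π) - u) := by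
    rw [hu]; field_simp
  rw [hlhs]
  gcongr
  linarith

theorem sum_range_add_sum_Icc_sub_le_sum_range {M : Type*} [AddCommMonoid M] [PartialOrder M]
    [IsOrderedAddMonoid M] {f : ℕ → M} (hf : ∀ j, 0 ≤ f j) {k N : ℕ} (hkN : 2 * k < N) :
    ∑ j ∈ range (k + 1), f j + ∑ j ∈ Icc 1 k, f (N - j) ≤ ∑ j ∈ range N, f j := by
  rw [← Ico_add_one_right_eq_Icc, sum_Ico_reflect f 1 (by omega), Nat.add_sub_add_right,
    Nat.add_sub_cancel, range_eq_Ico, range_eq_Ico,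
    ← sum_Ico_consecutive f (Nat.zero_le (N - k)) (Nat.sub_le N k)]
  gcongr
  · exact fun j _ _ => hf j
  · omega

theorem cos_two_pi_mul_sub_div {N j : ℕ} (hj : j ≤ N) :
    cos (2 * π * ((N - j : ℕ) : ℝ) / N) = cos (2 * π * j / N) := by
  obtain rfl | hN := eq_or_ne N 0
  · rw [Nat.le_zero.1 hj]
  rw [Nat.cast_sub hj, mul_sub, sub_div, mul_div_assoc, div_self (Nat.cast_ne_zero.2 hN), mul_one,
    cos_two_pi_sub]

theorem one_div_four_sub_two_cos_sub_two_cos_nonneg (x y : ℝ) :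
    0 ≤ 1 / (4 - 2 * cos x - 2 * cos y) :=
  one_div_nonneg.2 (by linarith [cos_le_one x, cos_le_one y])

noncomputable def torusRowSum (N : ℕ) (a : ℝ) : ℝ :=
  ∑ j ∈ range N, 1 / (4 - 2 * cos a - 2 * cos (2 * π * j / N))

theorem torusRowSum_nonneg (N : ℕ) (a : ℝ) : 0 ≤ torusRowSum N a :=
  sum_nonneg fun _ _ => one_div_four_sub_two_cos_sub_two_cos_nonneg _ _

theorem torusRowSum_congr_cos {N : ℕ} {a b : ℝ} (h : cos a = cos b) :
    torusRowSum N a = torusRowSum N b := by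
  rw [torusRowSum, torusRowSum, h]

theorem le_torusRowSum {N : ℕ} (hN : 0 < N) {a : ℝ} (ha : 0 < a) (haπ : a ≤ π) :
    N / (2 * a) - N / π ^ 2 - 1 / a ^ 2 ≤ torusRowSum N a := by
  set J := (N - 1) / 2
  set t := 2 * π / N with ht
  set r : ℕ → ℝ := fun j => 1 / (4 - 2 * cos a - 2 * cos (2 * π * j / N)) with hr
  have hcos : cos a < 1 := by
    simpa using cos_lt_cos_of_nonneg_of_le_pi le_rfl haπ ha
  have hr_nonneg (j : ℕ) : 0 ≤ r j := one_div_four_sub_two_cos_sub_two_cos_nonneg _ _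
  have hr_symm (j : ℕ) (hj : j ≤ N) : r (N - j) = r j := by
    simp only [hr, cos_two_pi_mul_sub_div hj]
  have hr_ge (j : ℕ) : 1 / (a ^ 2 + (j * t) ^ 2) ≤ r j := by
    have harg : 2 * π * j / N = j * t := by rw [ht]; ring
    simp only [hr, harg]
    have h1 := one_sub_sq_div_two_le_cos (x := a)
    have h2 := one_sub_sq_div_two_le_cos (x := j * t)
    apply one_div_le_one_div_of_le (by linarith [cos_le_one (j * t)])
    linarith
  have hJ : π ≤ (J + 1) * t := by
    have : (N : ℝ) ≤ 2 * (J + 1) := by exact_mod_cast (by omega : N ≤ 2 * (J + 1))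
    rw [ht, mul_div_assoc', le_div_iff₀ (by positivity)]
    nlinarith [pi_pos]
  calc N / (2 * a) - N / π ^ 2 - 1 / a ^ 2 = π / (t * a) - 2 / (t * π) - 1 / a ^ 2 := by
        rw [ht]; field_simp
    _ ≤ ∑ j ∈ range (J + 1), 1 / (a ^ 2 + (j * t) ^ 2) + ∑ j ∈ Icc 1 J, 1 / (a ^ 2 + (j * t) ^ 2) :=
        le_sum_inv_sq_add_sq ha (by positivity) hJ
    _ ≤ ∑ j ∈ range (J + 1), r j + ∑ j ∈ Icc 1 J, r (N - j) := by
        gcongr with j hj j hj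
        · exact hr_ge j
        · rw [hr_symm j (by simp at hj; omega)]; exact hr_ge j
    _ ≤ torusRowSum N a := sum_range_add_sum_Icc_sub_le_sum_range hr_nonneg (by omega)

theorem two_div_mul_sum_torusRowSum_le_Rave2 {M1 : ℕ} (hM1 : 0 < M1) (M2 : ℕ) :
    2 / (M1 * M2) * ∑ i ∈ Icc 1 ((M1 - 1) / 2), torusRowSum M2 (2 * π * i / M1) ≤
      Rave2 M1 M2 := by
  set K := (M1 - 1) / 2
  set G : ℕ → ℝ := fun i => ∑ j ∈ range M2,
    if i = 0 ∧ j = 0 then 0 else 1 / (4 - 2 * cos (2 * π * i / M1) - 2 * cos (2 * π * j / M2))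
  have hG_row (i : ℕ) (hi : i ≠ 0) : G i = torusRowSum M2 (2 * π * i / M1) :=
    sum_congr rfl fun j _ => if_neg fun h => hi h.1
  have hG_nonneg (i : ℕ) : 0 ≤ G i := by
    obtain rfl | hi := eq_or_ne i 0
    · exact sum_nonneg fun j _ => by
        split_ifs
        exacts [le_rfl, one_div_four_sub_two_cos_sub_two_cos_nonneg _ _]
    · exact hG_row i hi ▸ torusRowSum_nonneg _ _
  have hG_reflect (i : ℕ) (hi : i ∈ Icc 1 K) : G (M1 - i) = torusRowSum M2 (2 * π * i / M1) := by
    rw [mem_Icc] at hi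
    rw [hG_row _ (by omega)]
    exact torusRowSum_congr_cos (cos_two_pi_mul_sub_div (by omega))
  have hsplit := sum_range_add_sum_Icc_sub_le_sum_range hG_nonneg (show 2 * K < M1 by omega)
  have hdrop : ∑ i ∈ Icc 1 K, G i ≤ ∑ i ∈ range (K + 1), G i :=
    sum_le_sum_of_subset_of_nonneg (fun i hi => by simp at hi ⊢; omega) fun i _ _ => hG_nonneg i
  have hsum_row := sum_congr rfl fun i (hi : i ∈ Icc 1 K) => hG_row i (by simp at hi; omega)
  rw [sum_congr rfl hG_reflect] at hsplit
  rw [hsum_row] at hdrop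
  calc 2 / (M1 * M2) * ∑ i ∈ Icc 1 K, torusRowSum M2 (2 * π * i / M1)
      = 1 / (M1 * M2) * (2 * ∑ i ∈ Icc 1 K, torusRowSum M2 (2 * π * i / M1)) := by ring
    _ ≤ 1 / (M1 * M2) * ∑ i ∈ range M1, G i := by gcongr; linarith
    _ = Rave2 M1 M2 := rfl

theorem inv_sub_le_two_div_mul_torusRowSum {M1 M2 i : ℕ} (hi : 0 < i) (hiM1 : 2 * i ≤ M1)
    (h12 : M1 ≤ M2) :
    (2 * π)⁻¹ * (i : ℝ)⁻¹ - 2 / (π ^ 2 * M1) - (2 * π ^ 2)⁻¹ * ((i : ℝ) ^ 2)⁻¹ ≤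
      2 / (M1 * M2) * torusRowSum M2 (2 * π * i / M1) := by
  have hiR : (0 : ℝ) < i := by exact_mod_cast hi
  have hM1 : (0 : ℝ) < M1 := by exact_mod_cast (by omega : 0 < M1)
  have h12R : (M1 : ℝ) ≤ M2 := by exact_mod_cast h12
  have hM2 : (0 : ℝ) < M2 := hM1.trans_le h12R
  have ha : 0 < 2 * π * i / M1 := by positivity
  have haπ : 2 * π * i / M1 ≤ π := by
    rw [div_le_iff₀ hM1]
    have : 2 * (i : ℝ) ≤ M1 := by exact_mod_cast hiM1
    nlinarith [pi_pos]
  have hrow := le_torusRowSum (N := M2) (by omega) ha haπ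
  calc (2 * π)⁻¹ * (i : ℝ)⁻¹ - 2 / (π ^ 2 * M1) - (2 * π ^ 2)⁻¹ * ((i : ℝ) ^ 2)⁻¹
      ≤ (2 * π)⁻¹ * (i : ℝ)⁻¹ - 2 / (π ^ 2 * M1) - (2 * π ^ 2)⁻¹ * ((i : ℝ) ^ 2)⁻¹ * (M1 / M2) := by
        have : (2 * π ^ 2)⁻¹ * ((i : ℝ) ^ 2)⁻¹ * (M1 / M2) ≤ (2 * π ^ 2)⁻¹ * ((i : ℝ) ^ 2)⁻¹ :=
          mul_le_of_le_one_right (by positivity) (div_le_one_of_le₀ h12R hM2.le)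
        linarith
    _ = 2 / (M1 * M2) * (M2 / (2 * (2 * π * i / M1)) - M2 / π ^ 2 - 1 / (2 * π * i / M1) ^ 2) := by
        field_simp
    _ ≤ 2 / (M1 * M2) * torusRowSum M2 (2 * π * i / M1) := by gcongr

theorem log_sub_le_Rave2 {M1 M2 : ℕ} (hM1 : 0 < M1) (h12 : M1 ≤ M2) :
    (log M1 - log 2) / (2 * π) - 2 / π ^ 2 ≤ Rave2 M1 M2 := by
  set K := (M1 - 1) / 2
  have hM1R : (0 : ℝ) < M1 := by exact_mod_cast hM1
  have hlog : log M1 - log 2 ≤ harmonic K := by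
    have hhalf : (M1 : ℝ) / 2 ≤ (K + 1 : ℕ) := by
      rw [div_le_iff₀ two_pos]; exact_mod_cast (by omega : M1 ≤ (K + 1) * 2)
    rw [← log_div hM1R.ne' two_ne_zero]
    exact (log_le_log (by positivity) hhalf).trans (log_add_one_le_harmonic K)
  have hK : (K : ℝ) * (2 / (π ^ 2 * M1)) ≤ 1 / π ^ 2 := by
    rw [mul_div_assoc', div_le_div_iff₀ (by positivity) (by positivity)]
    have : (2 * K : ℝ) ≤ M1 := by exact_mod_cast (by omega : 2 * K ≤ M1)
    nlinarith [sq_nonneg π]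
  have hsq : ∑ i ∈ Icc 1 K, ((i : ℝ) ^ 2)⁻¹ ≤ 2 := by
    have := sum_Ioo_inv_sq_le (α := ℝ) 0 (K + 1)
    rwa [show Ioo 0 (K + 1) = Icc 1 K by ext; simp; omega, Nat.cast_zero, zero_add, div_one]
      at this
  calc (log M1 - log 2) / (2 * π) - 2 / π ^ 2
      ≤ (2 * π)⁻¹ * harmonic K - K * (2 / (π ^ 2 * M1)) -
          (2 * π ^ 2)⁻¹ * ∑ i ∈ Icc 1 K, ((i : ℝ) ^ 2)⁻¹ := by
        have hS := mul_le_mul_of_nonneg_left hsq (by positivity : (0 : ℝ) ≤ (2 * π ^ 2)⁻¹)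
        have hH := mul_le_mul_of_nonneg_left hlog (by positivity : (0 : ℝ) ≤ (2 * π)⁻¹)
        have hconst : (2 * π ^ 2)⁻¹ * 2 = 1 / π ^ 2 := by field_simp
        rw [div_eq_inv_mul, show 2 / π ^ 2 = 1 / π ^ 2 + 1 / π ^ 2 by ring]
        linarith
    _ = ∑ i ∈ Icc 1 K,
          ((2 * π)⁻¹ * (i : ℝ)⁻¹ - 2 / (π ^ 2 * M1) - (2 * π ^ 2)⁻¹ * ((i : ℝ) ^ 2)⁻¹) := by
        rw [sum_sub_distrib, sum_sub_distrib, ← mul_sum, ← mul_sum, sum_const, Nat.card_Icc,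
          Nat.add_sub_cancel, nsmul_eq_mul, harmonic_eq_sum_Icc]
        push_cast
        rfl
    _ ≤ ∑ i ∈ Icc 1 K, 2 / (M1 * M2) * torusRowSum M2 (2 * π * i / M1) := by
        gcongr with i hi
        rw [mem_Icc] at hi
        exact inv_sub_le_two_div_mul_torusRowSum (by omega) (by omega) h12
    _ ≤ Rave2 M1 M2 := by
        rw [← mul_sum]
        exact two_div_mul_sum_torusRowSum_le_Rave2 hM1 M2

theorem torus2_lower_log (M1 M2 : ℕ) (h1 : 4 ≤ M1) (h12 : M1 ≤ M2) :
    Rave2 M1 M2 ≥ (1 / (2 * Real.pi)) * Real.log M1 - (1 / 12) * ((M2 : ℝ) / M1) - 1 / 2 := by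
  have hR := log_sub_le_Rave2 (by omega) h12
  have hpi : 3 < π := pi_gt_three
  have hlog2 : log 2 / (2 * π) ≤ 0.7 / 6 :=
    div_le_div₀ (by norm_num) (log_two_lt_d9.le.trans (by norm_num)) (by norm_num) (by linarith)
  have hpi2 : 2 / π ^ 2 ≤ 2 / 9 := by gcongr; nlinarith
  have hratio : 0 ≤ (1 / 12) * ((M2 : ℝ) / M1) := by positivity
  rw [sub_div] at hR
  rw [ge_iff_le, one_div_mul_eq_div]
  linarith
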